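/- arXiv:1611.01818 — 2 statements merged into one kernel-verified Lean document; each statement's English description precedes it below -/
import Mathlib

section
/- Let G be a connected simple graph on a finite vertex set containing at least one edge. Then G is bipartite if and only if α₀(G) = 1/2. -/
open Matrix SimpleGraph

/-- Adjacency matrix of `G` over `ℝ`. -/
noncomputable def adjM {V : Type*} [Fintype V] (G : SimpleGraph V) : Matrix V V ℝ := by
  classical exact G.adjMatrix ℝ

/-- Diagonal matrix of vertex degrees of `G`, over `ℝ`. -/
noncomputable def degM {V : Type*} [Fintype V] (G : SimpleGraph V) : Matrix V V ℝ := by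
  classical exact Matrix.diagonal fun v => (G.degree v : ℝ)

/-- `A_α(G) = α·D(G) + (1-α)·A(G)`. -/
noncomputable def Amix {V : Type*} [Fintype V] (G : SimpleGraph V) (α : ℝ) : Matrix V V ℝ :=
  α • degM G + (1 - α) • adjM G

/-- Smallest eigenvalue of a real symmetric matrix (junk value `0` otherwise). -/
noncomputable def lambdaMin {n : Type*} [Fintype n] (M : Matrix n n ℝ) : ℝ := by
  classical exact if h : M.IsHermitian then ⨅ i, h.eigenvalues i else 0

/-- Largest eigenvalue of a real symmetric matrix (junk value `0` otherwise). -/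
noncomputable def lambdaMax {n : Type*} [Fintype n] (M : Matrix n n ℝ) : ℝ := by
  classical exact if h : M.IsHermitian then ⨆ i, h.eigenvalues i else 0

/-- `α₀(G)`: the smallest `α ∈ [0,1]` such that `A_α(G)` is positive semidefinite. -/
noncomputable def alpha0 {V : Type*} [Fintype V] (G : SimpleGraph V) : ℝ :=
  sInf {α : ℝ | α ∈ Set.Icc (0:ℝ) 1 ∧ (Amix G α).PosSemidef}

/-!
Write `A_α = (1 - α) Q + (2α - 1) D` with `Q = D + A` the signless Laplacian, whose quadratic
form is `½ ∑_{i ~ j} (x_i + x_j)²`. At `α = ½` this is `Q / 2 ≥ 0`. If `G` is bipartite, the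
`±1` vector of a 2-colouring kills `Q`, so for `α < ½` its value is `(2α - 1) ∑ d_i < 0`.
If `G` is connected and not bipartite, a vector killing `Q` has `x_j = -x_i` on every edge, so
it vanishes identically (otherwise its signs 2-colour `G`); hence `Q ≥ μ I` for some `μ > 0`,
and since `D ≤ Δ I` this bound survives for `α` slightly below `½`.
-/

open scoped MatrixOrder in
theorem Matrix.PosDef.exists_pos_mul_dotProduct_le {n : Type*} [Fintype n] {M : Matrix n n ℝ}
    (hM : M.PosDef) : ∃ r > 0, ∀ x : n → ℝ, r * (x ⬝ᵥ x) ≤ x ⬝ᵥ (M *ᵥ x) := by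
  classical
  cases isEmpty_or_nonempty n
  · exact ⟨1, one_pos, fun x => by simp [dotProduct]⟩
  obtain ⟨r, hr, hle⟩ := (CFC.exists_pos_algebraMap_le_iff hM.isHermitian.isSelfAdjoint).2
    fun x hx => hM.isStrictlyPositive.spectrum_pos hx
  refine ⟨r, hr, fun x => ?_⟩
  simpa [Algebra.algebraMap_eq_smul_one, sub_mulVec, smul_mulVec] using
    (Matrix.le_iff.mp hle).dotProduct_mulVec_nonneg x

namespace SimpleGraph

open Finset

theorem Colorable.exists_sq_eq_one_forall_adj_eq_neg {V R : Type*} [Ring R] {G : SimpleGraph V}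
    (h : G.Colorable 2) : ∃ x : V → R, (∀ v, x v ^ 2 = 1) ∧ ∀ i j, G.Adj i j → x i = -x j := by
  obtain ⟨c⟩ := h
  refine ⟨fun v => if c v = 0 then 1 else -1, fun v => by dsimp only; split_ifs <;> simp,
    fun i j hij => ?_⟩
  have hne := c.valid hij
  have hfin : ∀ a : Fin 2, a = 0 ∨ a = 1 := by decide
  rcases hfin (c i) with hi | hi <;> rcases hfin (c j) with hj | hj <;> simp_all

theorem Connected.colorable_two_of_forall_adj_eq_neg {V R : Type*} [Ring R] [LinearOrder R]
    [IsStrictOrderedRing R] {G : SimpleGraph V} (hconn : G.Connected) {x : V → R} (hx : x ≠ 0)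
    (h : ∀ i j, G.Adj i j → x i = -x j) : G.Colorable 2 := by
  have walk_ne_zero : ∀ {u v : V} (p : G.Walk u v), x u ≠ 0 → x v ≠ 0 := by
    intro u v p
    induction p with
    | nil => exact id
    | cons hadj _ ih => exact fun hu => ih (by simpa [h _ _ hadj] using hu)
  obtain ⟨w, hw⟩ := Function.ne_iff.mp hx
  have hne : ∀ v, x v ≠ 0 := fun v => (hconn.preconnected w v).elim fun p => walk_ne_zero p hw
  refine (Coloring.mk (fun v => decide (0 < x v)) fun {u v} huv => ?_).colorable
  have := h u v huv
  rcases (hne v).lt_or_gt with hv | hv <;> simp [this, hv, hv.le]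

variable {V : Type*} [Fintype V] [DecidableEq V] (G : SimpleGraph V) [DecidableRel G.Adj]

def signlessLapMatrix (R : Type*) [AddMonoidWithOne R] : Matrix V V R :=
  G.degMatrix R + G.adjMatrix R

theorem dotProduct_mulVec_signlessLapMatrix {R : Type*} [Field R] [CharZero R] (x : V → R) :
    x ⬝ᵥ (G.signlessLapMatrix R *ᵥ x) =
      (∑ i : V, ∑ j : V, if G.Adj i j then (x i + x j) ^ 2 else 0) / 2 := by
  simp_rw [signlessLapMatrix, add_mulVec, dotProduct_add, dotProduct_mulVec_degMatrix,
    dotProduct_mulVec_adjMatrix, ← sum_add_distrib, degree_eq_sum_if_adj, sum_mul, ite_mul,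
    one_mul, zero_mul, ← sum_add_distrib, ite_add_ite, add_zero]
  rw [← add_self_div_two (∑ i : V, ∑ j : V, _)]
  conv_lhs => enter [1, 2, 2, i, 2, j]; rw [if_congr (adj_comm G i j) rfl rfl]
  conv_lhs => enter [1, 2]; rw [Finset.sum_comm]
  simp_rw [← sum_add_distrib, ite_add_ite]
  congr 2 with i
  congr 2 with j
  ring_nf

theorem posSemidef_signlessLapMatrix {R : Type*} [Field R] [LinearOrder R] [IsStrictOrderedRing R]
    [StarRing R] [TrivialStar R] : (G.signlessLapMatrix R).PosSemidef := by
  refine .of_dotProduct_mulVec_nonneg ?_ fun x => ?_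
  · exact (G.isHermitian_degMatrix R).add (G.isHermitian_adjMatrix R)
  · rw [star_trivial, dotProduct_mulVec_signlessLapMatrix]
    positivity

theorem dotProduct_mulVec_signlessLapMatrix_eq_zero_iff {R : Type*} [Field R] [LinearOrder R]
    [IsStrictOrderedRing R] (x : V → R) :
    x ⬝ᵥ (G.signlessLapMatrix R *ᵥ x) = 0 ↔ ∀ i j, G.Adj i j → x i = -x j := by
  simp (disch := intros; positivity)
    [dotProduct_mulVec_signlessLapMatrix, sum_eq_zero_iff_of_nonneg, add_eq_zero_iff_eq_neg]

variable {G} in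
theorem Connected.posDef_signlessLapMatrix (hconn : G.Connected) (h : ¬ G.Colorable 2) :
    (G.signlessLapMatrix ℝ).PosDef := by
  refine .of_dotProduct_mulVec_pos (G.posSemidef_signlessLapMatrix).isHermitian fun x hx => ?_
  rw [star_trivial]
  refine (G.posSemidef_signlessLapMatrix.dotProduct_mulVec_nonneg x).lt_of_ne' fun h0 => h ?_
  exact hconn.colorable_two_of_forall_adj_eq_neg hx
    ((G.dotProduct_mulVec_signlessLapMatrix_eq_zero_iff x).1 h0)

end SimpleGraph

section Amix

open Finset

variable {V : Type*} [Fintype V] (G : SimpleGraph V)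

theorem adjM_eq [DecidableRel G.Adj] : adjM G = G.adjMatrix ℝ := by
  unfold adjM; congr

theorem degM_eq [DecidableEq V] [DecidableRel G.Adj] : degM G = G.degMatrix ℝ := by
  unfold degM degMatrix; congr!

theorem Amix_eq [DecidableEq V] [DecidableRel G.Adj] (α : ℝ) :
    Amix G α = (1 - α) • G.signlessLapMatrix ℝ + (2 * α - 1) • G.degMatrix ℝ := by
  rw [Amix, adjM_eq, degM_eq, signlessLapMatrix]
  module

theorem posSemidef_Amix_iff (α : ℝ) :
    (Amix G α).PosSemidef ↔ ∀ x : V → ℝ, 0 ≤ x ⬝ᵥ (Amix G α *ᵥ x) := by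
  classical
  have hherm : (Amix G α).IsHermitian := by
    rw [Amix_eq]
    exact ((G.posSemidef_signlessLapMatrix).isHermitian.smul (IsSelfAdjoint.all _)).add
      ((G.isHermitian_degMatrix ℝ).smul (IsSelfAdjoint.all _))
  refine ⟨fun h x => ?_, fun h => .of_dotProduct_mulVec_nonneg hherm fun x => ?_⟩
  · simpa using h.dotProduct_mulVec_nonneg x
  · simpa using h x

theorem dotProduct_mulVec_Amix [DecidableEq V] [DecidableRel G.Adj] (α : ℝ) (x : V → ℝ) :
    x ⬝ᵥ (Amix G α *ᵥ x) = (1 - α) * (x ⬝ᵥ (G.signlessLapMatrix ℝ *ᵥ x))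
      + (2 * α - 1) * ∑ i, G.degree i * x i * x i := by
  rw [Amix_eq, add_mulVec, smul_mulVec, smul_mulVec, dotProduct_add, dotProduct_smul,
    dotProduct_smul, dotProduct_mulVec_degMatrix, smul_eq_mul, smul_eq_mul]

theorem posSemidef_Amix_half : (Amix G (1 / 2)).PosSemidef := by
  classical
  refine (posSemidef_Amix_iff G _).2 fun x => ?_
  norm_num [dotProduct_mulVec_Amix]
  simpa using G.posSemidef_signlessLapMatrix.dotProduct_mulVec_nonneg x

theorem not_posSemidef_Amix_of_colorable (hcol : G.Colorable 2) (hedge : G.edgeSet.Nonempty)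
    {α : ℝ} (hα : α < 1 / 2) : ¬ (Amix G α).PosSemidef := by
  classical
  obtain ⟨x, hsq, hadj⟩ := hcol.exists_sq_eq_one_forall_adj_eq_neg (R := ℝ)
  have hQ := (G.dotProduct_mulVec_signlessLapMatrix_eq_zero_iff x).2 hadj
  obtain ⟨⟨u, v⟩, huv⟩ := hedge
  have hdeg : 0 < ∑ i, G.degree i * x i * x i := by
    simp_rw [mul_assoc, ← sq, hsq, mul_one]
    exact sum_pos' (fun _ _ => by positivity)
      ⟨u, mem_univ u, by exact_mod_cast G.degree_pos_iff_exists_adj u |>.2 ⟨v, huv⟩⟩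
  intro hpsd
  have := (posSemidef_Amix_iff G α).1 hpsd x
  rw [dotProduct_mulVec_Amix, hQ] at this
  nlinarith

theorem exists_posSemidef_Amix_of_not_colorable (hconn : G.Connected) (h : ¬ G.Colorable 2) :
    ∃ α ∈ Set.Ico (0 : ℝ) (1 / 2), (Amix G α).PosSemidef := by
  classical
  obtain ⟨μ, hμ, hQ⟩ := (hconn.posDef_signlessLapMatrix h).exists_pos_mul_dotProduct_le
  have hD : ∀ x : V → ℝ, ∑ i, G.degree i * x i * x i ≤ G.maxDegree * (x ⬝ᵥ x) := fun x => by
    rw [dotProduct, mul_sum]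
    refine sum_le_sum fun i _ => ?_
    rw [mul_assoc]
    exact mul_le_mul_of_nonneg_right (by exact_mod_cast G.degree_le_maxDegree i)
      (mul_self_nonneg _)
  -- chosen so that `2 t Δ ≤ μ`: then `Q ≥ μ I` absorbs the degree term of `A_{(1-t)/2}`
  set t : ℝ := μ / (2 * (G.maxDegree + μ))
  have ht : t * (2 * (G.maxDegree + μ)) = μ := div_mul_cancel₀ _ (by positivity)
  have ht0 : 0 < t := by positivity
  refine ⟨(1 - t) / 2, ⟨by nlinarith, by linarith⟩, (posSemidef_Amix_iff G _).2 fun x => ?_⟩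
  have hx : 0 ≤ x ⬝ᵥ x := by simpa using dotProduct_star_self_nonneg x
  rw [dotProduct_mulVec_Amix]
  nlinarith [mul_le_mul_of_nonneg_left (hQ x) (by linarith : 0 ≤ (1 + t) / 2),
    mul_le_mul_of_nonneg_left (hD x) ht0.le, mul_nonneg (mul_nonneg ht0.le hμ.le) hx]

end Amix

/-- A connected graph with at least one edge is bipartite
if and only if α₀(G) = 1/2. -/
theorem stmt_8 {V : Type*} [Fintype V] (G : SimpleGraph V)
    (hconn : G.Connected) (hedge : G.edgeSet.Nonempty) :
    G.Colorable 2 ↔ alpha0 G = 1 / 2 := by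
  have hhalf : (1 / 2 : ℝ) ∈ {α : ℝ | α ∈ Set.Icc (0 : ℝ) 1 ∧ (Amix G α).PosSemidef} :=
    ⟨by norm_num, posSemidef_Amix_half G⟩
  constructor
  · intro hcol
    exact IsLeast.csInf_eq ⟨hhalf, fun α hα =>
      not_lt.1 fun hlt => not_posSemidef_Amix_of_colorable G hcol hedge hlt hα.2⟩
  · intro h0
    by_contra hcol
    obtain ⟨α, hα, hpsd⟩ := exists_posSemidef_Amix_of_not_colorable G hconn hcol
    have : alpha0 G ≤ α :=
      csInf_le ⟨0, fun _ hβ => hβ.1.1⟩ ⟨⟨hα.1, by linarith [hα.2]⟩, hpsd⟩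
    linarith [hα.2]
end

section
/- Let G be a simple graph on n ≥ 1 vertices with m edges, let r ≥ 1 be an integer, let c be a proper coloring of G with colors {1, …, r}, and let α ∈ [0,1] be real. For a color k ∈ {1, …, r}, let V_k be the set of vertices of color k and let e_k = Σ_{u ∈ V_k} deg(u). Then λ_min(A_α(G)) · (r(r−2)·|V_k| + n) ≤ 2m + (αr − 2)·r·e_k. -/
open Matrix SimpleGraph

/-!
Test the Rayleigh quotient of `A_α(G)` at `x = r·1_{V_k} − 1`. A colour class is independent,
so no edge has both ends in `V_k`, and then `xᵀx = r(r−2)|V_k| + n` and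
`xᵀA_α(G)x = 2m + (αr − 2)r·e_k`, while `λ_min · xᵀx ≤ xᵀA_α(G)x` for every `x`.
-/

open Finset

section Rayleigh

variable {n : Type*} [Fintype n] {M : Matrix n n ℝ}

lemma posSemidef_sub_smul_one_of_le_eigenvalues [DecidableEq n] (hM : M.IsHermitian) {c : ℝ}
    (hc : ∀ i, c ≤ hM.eigenvalues i) : (M - c • 1).PosSemidef := by
  have hconj : M - c • 1 = Unitary.conjStarAlgAut ℝ _ hM.eigenvectorUnitary
      (diagonal (RCLike.ofReal ∘ hM.eigenvalues) - c • 1) := by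
    conv_lhs => rw [hM.spectral_theorem]
    rw [map_sub, map_smul, map_one]
  rw [hconj, Unitary.conjStarAlgAut_apply,
    IsUnit.posSemidef_star_right_conjugate_iff Unitary.isUnit_coe, smul_one_eq_diagonal,
    diagonal_sub, posSemidef_diagonal_iff]
  simpa using hc

lemma lambdaMin_mul_dotProduct_self_le (hM : M.IsHermitian) (x : n → ℝ) :
    lambdaMin M * (x ⬝ᵥ x) ≤ x ⬝ᵥ (M *ᵥ x) := by
  classical
  have hle : ∀ i, lambdaMin M ≤ hM.eigenvalues i := fun i => by
    rw [lambdaMin, dif_pos hM]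
    exact ciInf_le (Set.finite_range _).bddBelow i
  have := (posSemidef_sub_smul_one_of_le_eigenvalues hM hle).dotProduct_mulVec_nonneg x
  simpa [sub_mulVec, smul_mulVec, dotProduct_smul] using this

end Rayleigh

lemma smul_sub_dotProduct_mulVec_smul_sub {n R : Type*} [Fintype n] [CommRing R]
    {M : Matrix n n R} (hM : M.IsSymm) (t : R) (y z : n → R) :
    (t • y - z) ⬝ᵥ (M *ᵥ (t • y - z)) =
      t ^ 2 * (y ⬝ᵥ (M *ᵥ y)) - 2 * t * (y ⬝ᵥ (M *ᵥ z)) + z ⬝ᵥ (M *ᵥ z) := by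
  have hsymm : z ⬝ᵥ (M *ᵥ y) = y ⬝ᵥ (M *ᵥ z) := by
    rw [dotProduct_mulVec, ← mulVec_transpose, hM.eq, dotProduct_comm]
  simp only [mulVec_sub, mulVec_smul, sub_dotProduct, dotProduct_sub, smul_dotProduct,
    dotProduct_smul, smul_eq_mul, hsymm]
  ring

lemma indicator_one_dotProduct {V : Type*} [Fintype V] (S : Finset V) (f : V → ℝ) :
    (S : Set V).indicator 1 ⬝ᵥ f = ∑ v ∈ S, f v := by
  classical
  simp [dotProduct, Set.indicator_apply, ite_mul, sum_ite_mem]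

namespace SimpleGraph

variable {V : Type*} [Fintype V] (G : SimpleGraph V) [DecidableRel G.Adj]

lemma adjM_eq_adjMatrix : adjM G = G.adjMatrix ℝ := by
  unfold adjM; congr!

lemma degM_eq_degMatrix [DecidableEq V] : degM G = G.degMatrix ℝ := by
  unfold degM degMatrix; congr!

lemma Amix_eq_degMatrix_add_adjMatrix [DecidableEq V] (α : ℝ) :
    Amix G α = α • G.degMatrix ℝ + (1 - α) • G.adjMatrix ℝ := by
  rw [Amix, degM_eq_degMatrix, adjM_eq_adjMatrix]

lemma isSymm_Amix (α : ℝ) : (Amix G α).IsSymm := by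
  classical
  rw [Amix_eq_degMatrix_add_adjMatrix]
  exact ((G.isSymm_degMatrix ℝ).smul α).add (G.isSymm_adjMatrix.smul (1 - α))

lemma Amix_mulVec_one (α : ℝ) : Amix G α *ᵥ 1 = fun v => (G.degree v : ℝ) := by
  classical
  have hdeg : G.degMatrix ℝ *ᵥ 1 = fun v => (G.degree v : ℝ) := by
    ext v; simp [degMatrix_mulVec_apply]
  have hadj : G.adjMatrix ℝ *ᵥ 1 = fun v => (G.degree v : ℝ) := by
    ext v; simp [adjMatrix_mulVec_apply]
  rw [Amix_eq_degMatrix_add_adjMatrix, add_mulVec, smul_mulVec, smul_mulVec, hdeg, hadj,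
    ← add_smul, add_sub_cancel, one_smul]

lemma indicator_one_dotProduct_adjMatrix_mulVec_of_isIndepSet {S : Finset V}
    (hS : G.IsIndepSet S) :
    (S : Set V).indicator 1 ⬝ᵥ (G.adjMatrix ℝ *ᵥ (S : Set V).indicator 1) = 0 := by
  rw [indicator_one_dotProduct]
  refine sum_eq_zero fun u hu => ?_
  rw [adjMatrix_mulVec_apply]
  refine sum_eq_zero fun w hw => Set.indicator_of_notMem (fun hwS => ?_) _
  have hadj := (G.mem_neighborFinset u w).mp hw
  exact hS hu hwS (G.ne_of_adj hadj) hadj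

lemma indicator_one_dotProduct_Amix_mulVec_of_isIndepSet {S : Finset V} (hS : G.IsIndepSet S)
    (α : ℝ) :
    (S : Set V).indicator 1 ⬝ᵥ (Amix G α *ᵥ (S : Set V).indicator 1) =
      α * ∑ v ∈ S, (G.degree v : ℝ) := by
  classical
  rw [Amix_eq_degMatrix_add_adjMatrix, add_mulVec, dotProduct_add, smul_mulVec, smul_mulVec,
    dotProduct_smul, dotProduct_smul, G.indicator_one_dotProduct_adjMatrix_mulVec_of_isIndepSet hS,
    indicator_one_dotProduct, smul_zero, add_zero, smul_eq_mul]
  congr 1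
  refine sum_congr rfl fun v hv => ?_
  simp [degMatrix_mulVec_apply, Set.indicator_of_mem (mem_coe.mpr hv)]

theorem lambdaMin_Amix_mul_le_of_isIndepSet [DecidableEq V] (α t : ℝ) {S : Finset V}
    (hS : G.IsIndepSet S) :
    lambdaMin (Amix G α) * (t * (t - 2) * #S + Fintype.card V) ≤
      2 * #G.edgeFinset + (α * t - 2) * t * ∑ v ∈ S, (G.degree v : ℝ) := by
  set x : V → ℝ := t • (S : Set V).indicator 1 - 1 with hx
  have hdeg : ∑ v, (G.degree v : ℝ) = 2 * #G.edgeFinset := by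
    exact_mod_cast G.sum_degrees_eq_twice_card_edges
  have hnorm : x ⬝ᵥ x = t * (t - 2) * #S + Fintype.card V := by
    nth_rw 2 [← one_mulVec x]
    rw [hx, smul_sub_dotProduct_mulVec_smul_sub isSymm_one]
    simp only [one_mulVec, indicator_one_dotProduct, sum_indicator_subset _ subset_rfl,
      Pi.one_apply, sum_const, nsmul_eq_mul, mul_one, one_dotProduct_one]
    ring
  have hform : x ⬝ᵥ (Amix G α *ᵥ x) =
      2 * #G.edgeFinset + (α * t - 2) * t * ∑ v ∈ S, (G.degree v : ℝ) := by
    rw [hx, smul_sub_dotProduct_mulVec_smul_sub (G.isSymm_Amix α), Amix_mulVec_one,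
      G.indicator_one_dotProduct_Amix_mulVec_of_isIndepSet hS, indicator_one_dotProduct,
      one_dotProduct, hdeg]
    ring
  rw [← hnorm, ← hform]
  exact lambdaMin_mul_dotProduct_self_le ((isHermitian_iff_isSymm).mpr (G.isSymm_Amix α)) x

end SimpleGraph

theorem stmt_15_general {V : Type*} [Fintype V] [DecidableEq V] (G : SimpleGraph V)
    [DecidableRel G.Adj]
    (n : ℕ) (hn : n = Fintype.card V)
    (m : ℕ) (hm : m = G.edgeFinset.card)
    (r : ℕ) (c : G.Coloring (Fin r)) (k : Fin r)
    (Vk : Finset V) (hVk : Vk = Finset.univ.filter fun v => c v = k)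
    (ek : ℕ) (hek : ek = ∑ u ∈ Vk, G.degree u)
    (α : ℝ) :
    lambdaMin (Amix G α) * ((r : ℝ) * ((r : ℝ) - 2) * Vk.card + n)
      ≤ 2 * m + (α * r - 2) * r * ek := by
  subst hn hm hVk hek
  have hS : G.IsIndepSet (univ.filter fun v => c v = k : Finset V) := by
    simpa [coe_filter, Coloring.colorClass] using c.isIndepSet_colorClass k
  simpa using G.lambdaMin_Amix_mul_le_of_isIndepSet α r hS

/-- For a proper coloring c of G with colors in {1,…,r} (here Fin r),
with V_k the class of color k and e_k the sum of degrees over V_k,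
λ_min(A_α(G)) · (r(r−2)·|V_k| + n) ≤ 2m + (αr − 2)·r·e_k. -/
theorem stmt_15 {V : Type*} [Fintype V] [DecidableEq V] (G : SimpleGraph V)
    [DecidableRel G.Adj]
    (n : ℕ) (hn : n = Fintype.card V) (hn1 : 1 ≤ n)
    (m : ℕ) (hm : m = G.edgeFinset.card)
    (r : ℕ) (hr : 1 ≤ r) (c : G.Coloring (Fin r)) (k : Fin r)
    (Vk : Finset V) (hVk : Vk = Finset.univ.filter fun v => c v = k)
    (ek : ℕ) (hek : ek = ∑ u ∈ Vk, G.degree u)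
    (α : ℝ) (hα₁ : 0 ≤ α) (hα₂ : α ≤ 1) :
    lambdaMin (Amix G α) * ((r : ℝ) * ((r : ℝ) - 2) * Vk.card + n)
      ≤ 2 * m + (α * r - 2) * r * ek :=
  stmt_15_general G n hn m hm r c k Vk hVk ek hek α
end
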